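/- arXiv:1301.0936 — 2 statements merged into one kernel-verified Lean document; each statement's English description precedes it below -/
import Mathlib

section
/- Let r̂ be a bounded antilinear operator on a complex Hilbert space Z that is self-adjoint in the sense that ⟨z, r̂ z'⟩ = ⟨z', r̂ z⟩ for all z, z'. Then the ℝ-linear map e^{r̂} = Σₙ r̂ⁿ/n! preserves the symplectic form Im⟨·,·⟩, i.e., Im⟨e^{r̂} z, e^{r̂} z'⟩ = Im⟨z, z'⟩ for all z, z' ∈ Z. -/
set_option synthInstance.maxHeartbeats 400000


/-- **Antilinear exponentials are symplectomorphisms.** If `r̂` is a bounded ℝ-linear map on a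
complex Hilbert space `Z` that is conjugate-linear and symmetric (`⟨z, r̂z'⟩ = ⟨z', r̂z⟩`),
then `e^{r̂}` preserves the symplectic form `Im⟨·,·⟩`. -/
theorem exp_antilinear_symplectomorphism
    {Z : Type*} [NormedAddCommGroup Z] [InnerProductSpace ℂ Z] [CompleteSpace Z]
    (r : Z →L[ℝ] Z)
    (hanti : ∀ (c : ℂ) (z : Z), r (c • z) = (starRingEnd ℂ c) • r z)
    (hsym : ∀ z z' : Z, (inner ℂ z (r z') : ℂ) = (inner ℂ z' (r z) : ℂ)) :
    ∀ z z' : Z,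
      ((inner ℂ ((NormedSpace.exp r) z) ((NormedSpace.exp r) z') : ℂ)).im
        = ((inner ℂ z z' : ℂ)).im := by
  intro z z'
  have key : ∀ u v : Z, ((inner ℂ u (r v) : ℂ)).im + ((inner ℂ (r u) v : ℂ)).im = 0 := by
    intro u v
    have h1 : (inner ℂ (r u) v : ℂ) = starRingEnd ℂ (inner ℂ u (r v) : ℂ) := by
      rw [← inner_conj_symm, hsym]
    rw [h1, Complex.conj_im]; ring
  set f : ℝ → ℝ := fun t =>
    ((inner ℂ ((NormedSpace.exp (t • r)) z) ((NormedSpace.exp (t • r)) z') : ℂ)).im with hf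
  have hderiv : ∀ t : ℝ, HasDerivAt f 0 t := by
    intro t
    have hexp := hasDerivAt_exp_smul_const (𝕂 := ℝ) r t
    have hcomm : ∀ w : Z, (NormedSpace.exp (t • r)) (r w) = r ((NormedSpace.exp (t • r)) w) := by
      intro w
      have := (((Commute.refl r).smul_right t).exp_right).symm
      calc (NormedSpace.exp (t • r)) (r w) = ((NormedSpace.exp (t • r)) * r) w := rfl
        _ = (r * (NormedSpace.exp (t • r))) w := by rw [this]
        _ = r ((NormedSpace.exp (t • r)) w) := rfl
    have hz : HasDerivAt (fun u : ℝ => (NormedSpace.exp (u • r)) z)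
        (r ((NormedSpace.exp (t • r)) z)) t := by
      rw [← hcomm]; simpa using hexp.clm_apply (hasDerivAt_const t z)
    have hz' : HasDerivAt (fun u : ℝ => (NormedSpace.exp (u • r)) z')
        (r ((NormedSpace.exp (t • r)) z')) t := by
      rw [← hcomm]; simpa using hexp.clm_apply (hasDerivAt_const t z')
    have hin := hz.inner ℂ hz'
    have him := Complex.imCLM.hasFDerivAt.comp_hasDerivAt t hin
    have h0 : Complex.imCLM
        ((inner ℂ ((NormedSpace.exp (t • r)) z) (r ((NormedSpace.exp (t • r)) z')) : ℂ)
          + (inner ℂ (r ((NormedSpace.exp (t • r)) z)) ((NormedSpace.exp (t • r)) z') : ℂ))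
        = 0 := by
      simpa using key ((NormedSpace.exp (t • r)) z) ((NormedSpace.exp (t • r)) z')
    rw [h0] at him
    exact him
  have hdiff : Differentiable ℝ f := fun t => (hderiv t).differentiableAt
  have hconst : f 1 = f 0 :=
    is_const_of_deriv_eq_zero hdiff (fun t => (hderiv t).deriv) 1 0
  have h1 : f 1 = ((inner ℂ ((NormedSpace.exp r) z) ((NormedSpace.exp r) z') : ℂ)).im := by
    simp [hf]
  have h0 : f 0 = ((inner ℂ z z' : ℂ)).im := by
    simp [hf, NormedSpace.exp_zero]
  rw [← h1, hconst, h0]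
end

section
/- Let γ be a positive bounded self-adjoint operator and α̂ a bounded antilinear symmetric operator on a complex Hilbert space Z satisfying γ + γ² = α̂². If one sets r̂ = ½ sinh⁻¹(2α̂) (via functional calculus on the positive operator α̂²), then γ = ½(cosh(2r̂) − 1) and α̂ = ½ sinh(2r̂). -/
open Nat

lemma qf_ratio_continuous {F : ℝ → ℝ} (hF : Continuous F) (h0 : F 0 = 0)
    (hd : HasDerivAt F 1 0) :
    Continuous (fun y : ℝ => if y = 0 then 1 else F y / y) := by
  rw [continuous_iff_continuousAt]
  intro y
  rcases eq_or_ne y 0 with rfl | hy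
  · rw [← continuousWithinAt_compl_self]
    have hslope : Filter.Tendsto (slope F 0) (nhdsWithin 0 {(0:ℝ)}ᶜ) (nhds 1) :=
      hasDerivAt_iff_tendsto_slope.mp hd
    have heq : (fun y : ℝ => if y = 0 then 1 else F y / y) =ᶠ[nhdsWithin (0:ℝ) {(0:ℝ)}ᶜ]
        slope F 0 := by
      filter_upwards [self_mem_nhdsWithin] with t ht
      have ht' : t ≠ 0 := ht
      simp [slope_def_field, ht', h0]
    have : Filter.Tendsto (fun y : ℝ => if y = 0 then 1 else F y / y)
        (nhdsWithin 0 {(0:ℝ)}ᶜ) (nhds 1) := hslope.congr' heq.symm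
    simpa [ContinuousWithinAt] using this
  · have hc : ContinuousAt (fun t : ℝ => F t / t) y :=
      (hF.continuousAt).div continuousAt_id hy
    apply hc.congr
    filter_upwards [eventually_ne_nhds hy] with t ht
    simp [ht]

lemma qf_hasSum_exp (t : ℝ) : HasSum (fun n : ℕ => (n ! : ℝ)⁻¹ * t ^ n) (Real.exp t) := by
  have h := NormedSpace.exp_series_hasSum_exp' (𝕂 := ℝ) t
  rw [Real.exp_eq_exp_ℝ]
  simpa [smul_eq_mul] using h

lemma qf_summable_even (y : ℝ) :
    Summable (fun k : ℕ => ((2*k)! : ℝ)⁻¹ * (y^2)^k) := by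
  refine Summable.of_nonneg_of_le (fun k => ?_) (fun k => ?_)
    (Real.summable_pow_div_factorial (y^2))
  · positivity
  · rw [div_eq_inv_mul]
    apply mul_le_mul_of_nonneg_right _ (by positivity)
    have h1 : (0:ℝ) < (k)! := by positivity
    have h2 : ((k)! : ℝ) ≤ (((2*k))! : ℝ) := by
      exact_mod_cast Nat.factorial_le (by omega)
    exact inv_anti₀ h1 h2

lemma qf_summable_odd (y : ℝ) :
    Summable (fun k : ℕ => ((2*k+1)! : ℝ)⁻¹ * (y^2)^k) := by
  refine Summable.of_nonneg_of_le (fun k => ?_) (fun k => ?_)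
    (Real.summable_pow_div_factorial (y^2))
  · positivity
  · rw [div_eq_inv_mul]
    apply mul_le_mul_of_nonneg_right _ (by positivity)
    have h1 : (0:ℝ) < (k)! := by positivity
    have h2 : ((k)! : ℝ) ≤ (((2*k+1))! : ℝ) := by
      exact_mod_cast Nat.factorial_le (by omega)
    exact inv_anti₀ h1 h2

lemma qf_EO (y : ℝ) :
    (∑' k : ℕ, ((2*k)! : ℝ)⁻¹ * (y^2)^k) = Real.cosh y ∧
    (∑' k : ℕ, ((2*k+1)! : ℝ)⁻¹ * (y^2)^k) * y = Real.sinh y := by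
  have hse := qf_summable_even y
  have hso := qf_summable_odd y
  have h1 : HasSum (fun n : ℕ => (n ! : ℝ)⁻¹ * y ^ n)
      ((∑' k : ℕ, ((2*k)! : ℝ)⁻¹ * (y^2)^k) +
        (∑' k : ℕ, ((2*k+1)! : ℝ)⁻¹ * (y^2)^k) * y) := by
    refine HasSum.even_add_odd ?_ ?_
    · have h := hse.hasSum
      have he : (fun k : ℕ => ((2*k)! : ℝ)⁻¹ * y^(2*k))
          = fun k : ℕ => ((2*k)! : ℝ)⁻¹ * (y^2)^k := by
        funext k; rw [pow_mul]
      rw [he]; exact h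
    · have h := hso.hasSum.mul_right y
      have he : (fun k : ℕ => ((2*k+1)! : ℝ)⁻¹ * y^(2*k+1))
          = fun k : ℕ => (((2*k+1)! : ℝ)⁻¹ * (y^2)^k) * y := by
        funext k; rw [pow_succ, pow_mul]; ring
      rw [he]; exact h
  have h2 : HasSum (fun n : ℕ => (n ! : ℝ)⁻¹ * (-y) ^ n)
      ((∑' k : ℕ, ((2*k)! : ℝ)⁻¹ * (y^2)^k) +
        -((∑' k : ℕ, ((2*k+1)! : ℝ)⁻¹ * (y^2)^k) * y)) := by
    refine HasSum.even_add_odd ?_ ?_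
    · have h := hse.hasSum
      have he : (fun k : ℕ => ((2*k)! : ℝ)⁻¹ * (-y)^(2*k))
          = fun k : ℕ => ((2*k)! : ℝ)⁻¹ * (y^2)^k := by
        funext k; rw [pow_mul, neg_sq]
      rw [he]; exact h
    · have h := (hso.hasSum.mul_right y).neg
      have he : (fun k : ℕ => ((2*k+1)! : ℝ)⁻¹ * (-y)^(2*k+1))
          = fun k : ℕ => -((((2*k+1)! : ℝ)⁻¹ * (y^2)^k) * y) := by
        funext k
        have hp : (-y)^(2*k+1) = (y^2)^k * (-y) := by
          rw [pow_succ, pow_mul, neg_sq]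
        rw [hp]; ring
      rw [he]; exact h
  have he1 := h1.unique (qf_hasSum_exp y)
  have he2 := h2.unique (qf_hasSum_exp (-y))
  constructor
  · rw [Real.cosh_eq]; linarith
  · rw [Real.sinh_eq]; linarith

lemma qf_hasSum_cosh (y : ℝ) :
    HasSum (fun k : ℕ => ((2*k)! : ℝ)⁻¹ * (y^2)^k) (Real.cosh y) := by
  have h := (qf_summable_even y).hasSum
  rwa [(qf_EO y).1] at h

lemma qf_hasSum_sinh_div (y : ℝ) (hy : y ≠ 0) :
    HasSum (fun k : ℕ => ((2*k+1)! : ℝ)⁻¹ * (y^2)^k) (Real.sinh y / y) := by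
  have h := (qf_summable_odd y).hasSum
  have hv : (∑' k : ℕ, ((2*k+1)! : ℝ)⁻¹ * (y^2)^k) = Real.sinh y / y := by
    rw [eq_div_iff hy]; exact (qf_EO y).2
  rwa [hv] at h


noncomputable section

def qfPhi : ℝ → ℝ := fun y => if y = 0 then 1 else Real.arsinh y / y
def qfPsi : ℝ → ℝ := fun y => if y = 0 then 1 else Real.sinh y / y
def qfH : ℝ → ℝ := fun x => qfPhi (2 * Real.sqrt x)
def qfO : ℝ → ℝ := fun x => qfPsi (Real.arsinh (2 * Real.sqrt x))
def qfW : ℝ → ℝ := fun x => (Real.arsinh (2 * Real.sqrt x))^2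
def qfF : ℝ → ℝ := fun x => (Real.sqrt (1 + 4*x) - 1)/2
def qfC : ℝ → ℝ := fun x => Real.sqrt (1 + 4*x)

lemma qfPhi_cont : Continuous qfPhi :=
  qf_ratio_continuous Real.continuous_arsinh Real.arsinh_zero
    (by simpa using Real.hasDerivAt_arsinh 0)

lemma qfPsi_cont : Continuous qfPsi :=
  qf_ratio_continuous Real.continuous_sinh Real.sinh_zero
    (by simpa using Real.hasDerivAt_sinh 0)

lemma qfH_cont : Continuous qfH := qfPhi_cont.comp (by continuity)
lemma qfO_cont : Continuous qfO :=
  qfPsi_cont.comp (Real.continuous_arsinh.comp (by continuity))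
lemma qfW_cont : Continuous qfW := by
  have : Continuous fun x : ℝ => Real.arsinh (2 * Real.sqrt x) :=
    Real.continuous_arsinh.comp (by continuity)
  exact this.pow 2
lemma qfF_cont : Continuous qfF := by
  have h : Continuous fun x : ℝ => Real.sqrt (1 + 4*x) :=
    Real.continuous_sqrt.comp (by continuity)
  exact (h.sub continuous_const).div_const 2
lemma qfC_cont : Continuous qfC := Real.continuous_sqrt.comp (by continuity)

lemma qf_key1 (x : ℝ) (hx : 0 ≤ x) : 4 * (x * (qfH x * qfH x)) = qfW x := by
  rcases eq_or_lt_of_le hx with h | h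
  · simp [qfH, qfW, qfPhi, ← h]
  · have ht : Real.sqrt x > 0 := Real.sqrt_pos.2 h
    have ht2 : (2 * Real.sqrt x) ≠ 0 := by positivity
    have hx2 : Real.sqrt x ^ 2 = x := Real.sq_sqrt hx
    simp only [qfH, qfW, qfPhi, if_neg ht2]
    field_simp
    nlinarith [hx2, sq_nonneg (Real.arsinh (2*Real.sqrt x))]

lemma qf_key2 (x : ℝ) (hx : 0 ≤ x) : qfO x * qfH x = 1 := by
  rcases eq_or_lt_of_le hx with h | h
  · simp [qfH, qfO, qfPhi, qfPsi, ← h]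
  · have ht : Real.sqrt x > 0 := Real.sqrt_pos.2 h
    have ht2 : (2 * Real.sqrt x) ≠ 0 := by positivity
    have hy : Real.arsinh (2 * Real.sqrt x) ≠ 0 := by
      rw [ne_eq, Real.arsinh_eq_zero_iff]; exact ht2
    simp only [qfH, qfO, qfPhi, qfPsi, if_neg ht2, if_neg hy, Real.sinh_arsinh]
    field_simp

lemma qf_key3 (x : ℝ) (hx : 0 ≤ x) :
    Real.cosh (Real.arsinh (2 * Real.sqrt x)) = qfC x := by
  rw [Real.cosh_arsinh, qfC]
  congr 1
  rw [mul_pow, Real.sq_sqrt hx]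
  ring

lemma qf_key4 (x : ℝ) : 1 + 2 * qfF x = qfC x := by
  simp only [qfF, qfC]; ring

lemma qf_ffp (x : ℝ) (hx : 0 ≤ x) : qfF (x + x*x) = x := by
  simp only [qfF]
  rw [show 1 + 4*(x + x*x) = (1+2*x)^2 by ring, Real.sqrt_sq (by linarith)]
  ring

lemma qf_hasSum_even_pt (x : ℝ) (hx : 0 ≤ x) :
    HasSum (fun k : ℕ => ((2*k)! : ℝ)⁻¹ * (qfW x)^k) (qfC x) := by
  have h := qf_hasSum_cosh (Real.arsinh (2 * Real.sqrt x))
  rw [qf_key3 x hx] at h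
  exact h

lemma qf_hasSum_odd_pt (x : ℝ) (hx : 0 ≤ x) :
    HasSum (fun k : ℕ => ((2*k+1)! : ℝ)⁻¹ * (qfW x)^k) (qfO x) := by
  by_cases hy : Real.arsinh (2 * Real.sqrt x) = 0
  · have hw : qfW x = 0 := by simp [qfW, hy]
    have ho : qfO x = 1 := by simp [qfO, qfPsi, hy]
    rw [hw, ho]
    have h := hasSum_single (f := fun k : ℕ => ((2*k+1)! : ℝ)⁻¹ * (0:ℝ)^k) 0
      (fun b hb => by simp [zero_pow hb])
    simpa using h
  · have h := qf_hasSum_sinh_div _ hy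
    have ho : qfO x = Real.sinh (Real.arsinh (2 * Real.sqrt x)) /
        Real.arsinh (2 * Real.sqrt x) := by simp [qfO, qfPsi, hy]
    rw [ho]
    exact h

lemma qf_hasSum_CM {X : Type*} [TopologicalSpace X] [CompactSpace X]
    {F : ℕ → C(X, ℝ)} {L : C(X, ℝ)} (hs : Summable F)
    (h : ∀ x : X, HasSum (fun k => F k x) (L x)) : HasSum F L := by
  have h1 := hs.hasSum
  have hL : L = ∑' k, F k :=
    ContinuousMap.ext fun x => (h x).unique (ContinuousMap.hasSum_apply h1 x)
  rw [hL]; exact h1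

lemma qf_summable_CM {X : Type*} [TopologicalSpace X] [CompactSpace X]
    (w : C(X, ℝ)) (c : ℕ → ℕ) (hc : ∀ k, k ≤ c k) :
    Summable (fun k : ℕ => ((c k)! : ℝ)⁻¹ • w ^ k) := by
  refine Summable.of_norm_bounded_eventually_nat (g := fun k => ‖w‖^k / (k)!)
    (Real.summable_pow_div_factorial ‖w‖) ?_
  filter_upwards [Filter.eventually_ge_atTop 1] with k hk
  rw [show ‖((c k)! : ℝ)⁻¹ • w ^ k‖ = ‖((c k)! : ℝ)⁻¹‖ * ‖w ^ k‖ from norm_smul (((c k)! : ℝ)⁻¹) (w ^ k)]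
  have h1 : ‖((c k)! : ℝ)⁻¹‖ = ((c k)! : ℝ)⁻¹ := Real.norm_of_nonneg (by positivity)
  have h2 : ‖w ^ k‖ ≤ ‖w‖ ^ k := norm_pow_le' w hk
  have h3 : ((c k)! : ℝ)⁻¹ ≤ ((k)! : ℝ)⁻¹ := by
    apply inv_anti₀ (by positivity)
    exact_mod_cast Nat.factorial_le (hc k)
  rw [h1, div_eq_inv_mul]
  exact mul_le_mul h3 h2 (norm_nonneg _) (by positivity)


end

set_option maxHeartbeats 2000000 in
set_option synthInstance.maxHeartbeats 1000000 in
/-- **Recovering the `r̂`-parametrization from the pure quasifree constraint.** If `γ` is a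
positive bounded self-adjoint (ℂ-linear) operator and `α̂` a bounded symmetric antilinear
operator with `γ + γ² = α̂²`, then there is a bounded symmetric antilinear `r̂`
(namely `r̂ = ½ sinh⁻¹(2α̂)`) with `γ = ½(cosh(2r̂) − 1)` and `α̂ = ½ sinh(2r̂)`. -/
theorem r_parametrization_of_pure_quasifree_constraint
    {Z : Type*} [NormedAddCommGroup Z] [InnerProductSpace ℂ Z] [CompleteSpace Z]
    (g : Z →L[ℂ] Z) (hg : IsSelfAdjoint g)
    (hpos : ∀ z : Z, 0 ≤ (inner ℂ z (g z) : ℂ).re)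
    (α : Z →L[ℝ] Z)
    (hαanti : ∀ (c : ℂ) (z : Z), α (c • z) = (starRingEnd ℂ c) • α z)
    (hαsym : ∀ z z' : Z, (inner ℂ z (α z') : ℂ) = (inner ℂ z' (α z) : ℂ))
    (hcon : (g.restrictScalars ℝ) + (g.restrictScalars ℝ) * (g.restrictScalars ℝ) = α * α) :
    ∃ r : Z →L[ℝ] Z,
      (∀ (c : ℂ) (z : Z), r (c • z) = (starRingEnd ℂ c) • r z) ∧
      (∀ z z' : Z, (inner ℂ z (r z') : ℂ) = (inner ℂ z' (r z) : ℂ)) ∧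
      g.restrictScalars ℝ =
        (2 : ℝ)⁻¹ • ((2 : ℝ)⁻¹ •
          (NormedSpace.exp ((2 : ℝ) • r) + NormedSpace.exp (-((2 : ℝ) • r))) - 1) ∧
      α = (2 : ℝ)⁻¹ • ((2 : ℝ)⁻¹ •
          (NormedSpace.exp ((2 : ℝ) • r) - NormedSpace.exp (-((2 : ℝ) • r)))) := by
  classical
  -- restriction-of-scalars basics
  have ιmul : ∀ x y : Z →L[ℂ] Z, (x * y).restrictScalars ℝ =
      x.restrictScalars ℝ * y.restrictScalars ℝ := fun x y => by ext z; rfl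
  have ιadd : ∀ x y : Z →L[ℂ] Z, (x + y).restrictScalars ℝ =
      x.restrictScalars ℝ + y.restrictScalars ℝ := fun x y => by ext z; rfl
  have ιone : ((1 : Z →L[ℂ] Z)).restrictScalars ℝ = 1 := by ext z; rfl
  have ιsmul : ∀ (c : ℝ) (x : Z →L[ℂ] Z), ((c • x).restrictScalars ℝ)
      = c • x.restrictScalars ℝ := fun c x => by ext z; rfl
  have ιpow : ∀ (x : Z →L[ℂ] Z) (k : ℕ), (x ^ k).restrictScalars ℝ
      = (x.restrictScalars ℝ) ^ k := by
    intro x k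
    induction k with
    | zero => simpa using ιone
    | succ n ih => rw [pow_succ, pow_succ, ιmul, ih]
  have ιcont : Continuous (fun x : Z →L[ℂ] Z => x.restrictScalars ℝ) :=
    (ContinuousLinearMap.restrictScalarsIsometry ℂ Z Z ℝ ℝ).continuous
  let ιhom : (Z →L[ℂ] Z) →+ (Z →L[ℝ] Z) :=
    { toFun := fun x => x.restrictScalars ℝ
      map_zero' := by ext z; rfl
      map_add' := fun x y => by ext z; rfl }
  have ιHasSum : ∀ {F : ℕ → Z →L[ℂ] Z} {L : Z →L[ℂ] Z}, HasSum F L →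
      HasSum (fun k => (F k).restrictScalars ℝ) (L.restrictScalars ℝ) := by
    intro F L h
    have h2 := h.map ιhom ιcont
    exact h2
  set A2 : Z →L[ℂ] Z := g + g * g with hA2def
  have hA2r : A2.restrictScalars ℝ = α * α := by
    rw [hA2def, ιadd, ιmul]; exact hcon
  have hA2sa : IsSelfAdjoint A2 := by
    rw [hA2def]
    exact hg.add (by rw [IsSelfAdjoint, star_mul, hg.star_eq])
  have hgP : g.IsPositive := by
    refine ContinuousLinearMap.isPositive_def'.mpr ⟨hg, fun x => ?_⟩
    have h := hpos x
    simp only [ContinuousLinearMap.reApplyInnerSelf]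
    rw [inner_re_symm]
    simpa using h
  have hgnn : (0 : Z →L[ℂ] Z) ≤ g := (ContinuousLinearMap.nonneg_iff_isPositive g).mpr hgP
  have hggnn : (0 : Z →L[ℂ] Z) ≤ g * g := by
    simpa [hg.star_eq] using star_mul_self_nonneg g
  have hA2nn : (0 : Z →L[ℂ] Z) ≤ A2 := by rw [hA2def]; exact add_nonneg hgnn hggnn
  have hσg : ∀ x ∈ spectrum ℝ g, (0:ℝ) ≤ x := fun x hx =>
    spectrum_nonneg_of_nonneg hgnn hx
  have hσ : ∀ x ∈ spectrum ℝ A2, (0:ℝ) ≤ x := fun x hx =>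
    spectrum_nonneg_of_nonneg hA2nn hx
  -- `g` as a continuous function of `A2`
  have hpoly : cfc (fun x : ℝ => x + x * x) g = A2 := by
    rw [cfc_add (a := g) (f := fun x : ℝ => x) (g := fun x : ℝ => x * x)
        (by fun_prop) (by fun_prop),
      cfc_mul (f := fun x : ℝ => x) (g := fun x : ℝ => x) (a := g) (by fun_prop) (by fun_prop),
      cfc_id' ℝ g]
  have hgf : cfc qfF A2 = g := by
    rw [← hpoly, ← cfc_comp qfF (fun x : ℝ => x + x * x) g hg
      (qfF_cont.continuousOn) (by fun_prop)]
    have hEq : (spectrum ℝ g).EqOn (qfF ∘ fun x : ℝ => x + x * x) id := fun x hx => by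
      simp only [Function.comp_apply, id_eq]
      exact qf_ffp x (hσg x hx)
    rw [cfc_congr hEq, cfc_id ℝ g]
  -- Stone–Weierstrass: α commutes with every continuous function of A2
  let Φ : C(spectrum ℝ A2, ℝ) → (Z →L[ℝ] Z) :=
    fun pf => (cfcHom (R := ℝ) hA2sa pf).restrictScalars ℝ
  have hΦcont : Continuous Φ :=
    ιcont.comp (cfcHom_isClosedEmbedding (R := ℝ) hA2sa).continuous
  have hΦmul : ∀ pf qf : C(spectrum ℝ A2, ℝ), Φ (pf * qf) = Φ pf * Φ qf := fun pf qf => by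
    simp only [Φ, map_mul, ιmul]
  have hΦadd : ∀ pf qf : C(spectrum ℝ A2, ℝ), Φ (pf + qf) = Φ pf + Φ qf := fun pf qf => by
    simp only [Φ, map_add, ιadd]
  let S : Subalgebra ℝ C(spectrum ℝ A2, ℝ) :=
    { carrier := {pf | α * Φ pf = Φ pf * α}
      mul_mem' := by
        intro pf qf hpf hqf
        simp only [Set.mem_setOf_eq] at *
        rw [hΦmul, ← mul_assoc, hpf, mul_assoc, hqf, ← mul_assoc]
      one_mem' := by
        simp only [Set.mem_setOf_eq, Φ, map_one, ιone, mul_one, one_mul]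
      add_mem' := by
        intro pf qf hpf hqf
        simp only [Set.mem_setOf_eq] at *
        rw [hΦadd, mul_add, add_mul, hpf, hqf]
      zero_mem' := by
        have : Φ 0 = 0 := by
          simp only [Φ, map_zero]
          ext z; rfl
        simp only [Set.mem_setOf_eq, this, mul_zero, zero_mul]
      algebraMap_mem' := by
        intro c
        simp only [Set.mem_setOf_eq]
        have hval : Φ (algebraMap ℝ C(spectrum ℝ A2, ℝ) c)
            = algebraMap ℝ (Z →L[ℝ] Z) c := by
          simp only [Φ, AlgHomClass.commutes]
          ext z
          simp [Algebra.algebraMap_eq_smul_one]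
        rw [hval]
        exact (Algebra.commutes c α).symm }
  have hXS : polynomialFunctions (spectrum ℝ A2) ≤ S := by
    rw [polynomialFunctions.eq_adjoin_X]
    apply Algebra.adjoin_le
    intro pf hpf
    rw [Set.mem_singleton_iff] at hpf
    subst hpf
    show α * Φ _ = Φ _ * α
    have hX : (Polynomial.toContinuousMapOnAlgHom (spectrum ℝ A2) Polynomial.X)
        = (ContinuousMap.id ℝ).restrict (spectrum ℝ A2) := by
      ext x; simp
    rw [hX]
    have hid : Φ ((ContinuousMap.id ℝ).restrict (spectrum ℝ A2)) = A2.restrictScalars ℝ := by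
      simp only [Φ]
      rw [cfcHom_id hA2sa]
    rw [hid, hA2r, ← mul_assoc]
  have hSclosed : IsClosed (S : Set C(spectrum ℝ A2, ℝ)) :=
    isClosed_eq (continuous_const.mul hΦcont) (hΦcont.mul continuous_const)
  have hSall : ∀ pf : C(spectrum ℝ A2, ℝ), pf ∈ S := by
    have h1 := polynomialFunctions.topologicalClosure (spectrum ℝ A2)
    have h2 := Subalgebra.topologicalClosure_minimal hXS hSclosed
    rw [h1] at h2
    intro pf; exact h2 (by trivial)
  have key : ∀ (f : ℝ → ℝ), Continuous f →
      α * (cfc f A2).restrictScalars ℝ = (cfc f A2).restrictScalars ℝ * α := by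
    intro f hf
    rw [cfc_apply f A2 hA2sa hf.continuousOn]
    exact hSall _
  have hcomm_h := key qfH qfH_cont
  have hcomm_o := key qfO qfO_cont
  -- the square identity
  have hWfact : (4:ℝ) • (A2 * (cfc qfH A2 * cfc qfH A2)) = cfc qfW A2 := by
    have e1 : cfc (fun x : ℝ => x * (qfH x * qfH x)) A2
        = A2 * (cfc qfH A2 * cfc qfH A2) := by
      rw [cfc_mul (a := A2) (f := fun x : ℝ => x) (g := fun x => qfH x * qfH x)
        (by fun_prop) (by exact (qfH_cont.mul qfH_cont).continuousOn),
        cfc_mul (a := A2) (f := qfH) (g := qfH)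
        (qfH_cont.continuousOn) (qfH_cont.continuousOn),
        cfc_id' ℝ A2]
    rw [← e1, ← cfc_smul (a := A2) (s := (4:ℝ)) (f := fun x => x * (qfH x * qfH x))
      (by exact ((continuous_id.mul (qfH_cont.mul qfH_cont))).continuousOn)]
    exact cfc_congr (fun x hx => by simpa [smul_eq_mul] using qf_key1 x (hσ x hx))
  have hOu : cfc qfO A2 * cfc qfH A2 = (1 : Z →L[ℂ] Z) := by
    rw [← cfc_mul (a := A2) (f := qfO) (g := qfH)
      (qfO_cont.continuousOn) (qfH_cont.continuousOn)]
    have hEq : (spectrum ℝ A2).EqOn (fun x => qfO x * qfH x) (fun _ => (1:ℝ)) :=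
      fun x hx => qf_key2 x (hσ x hx)
    rw [cfc_congr hEq]
    rw [cfc_const (1:ℝ) A2 hA2sa, map_one]
  -- continuous-map level sums
  have hWapp : cfc qfW A2 = cfcHom (R := ℝ) hA2sa ⟨_, qfW_cont.continuousOn.restrict⟩ :=
    cfc_apply qfW A2 hA2sa qfW_cont.continuousOn
  have hCapp : cfc qfC A2 = cfcHom (R := ℝ) hA2sa ⟨_, qfC_cont.continuousOn.restrict⟩ :=
    cfc_apply qfC A2 hA2sa qfC_cont.continuousOn
  have hOapp : cfc qfO A2 = cfcHom (R := ℝ) hA2sa ⟨_, qfO_cont.continuousOn.restrict⟩ :=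
    cfc_apply qfO A2 hA2sa qfO_cont.continuousOn
  have hsumCM_even : HasSum
      (fun k : ℕ => ((2*k)! : ℝ)⁻¹ •
        (⟨_, qfW_cont.continuousOn.restrict⟩ : C(spectrum ℝ A2, ℝ)) ^ k)
      (⟨_, qfC_cont.continuousOn.restrict⟩ : C(spectrum ℝ A2, ℝ)) := by
    refine qf_hasSum_CM (qf_summable_CM _ (fun k => 2*k) (fun k => by show k ≤ 2*k; omega)) ?_
    intro x
    have hx0 : (0:ℝ) ≤ (x : ℝ) := hσ x x.2
    have h := qf_hasSum_even_pt x hx0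
    simpa [smul_eq_mul] using h
  have hsumCM_odd : HasSum
      (fun k : ℕ => ((2*k+1)! : ℝ)⁻¹ •
        (⟨_, qfW_cont.continuousOn.restrict⟩ : C(spectrum ℝ A2, ℝ)) ^ k)
      (⟨_, qfO_cont.continuousOn.restrict⟩ : C(spectrum ℝ A2, ℝ)) := by
    refine qf_hasSum_CM (qf_summable_CM _ (fun k => 2*k+1) (fun k => by show k ≤ 2*k+1; omega)) ?_
    intro x
    have hx0 : (0:ℝ) ≤ (x : ℝ) := hσ x x.2
    have h := qf_hasSum_odd_pt x hx0
    simpa [smul_eq_mul] using h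
  -- transport to the algebra
  have hsumA_even : HasSum (fun k : ℕ => ((2*k)! : ℝ)⁻¹ • (cfc qfW A2) ^ k)
      (1 + (2:ℝ) • g) := by
    have h := hsumCM_even.map (cfcHom (R := ℝ) hA2sa)
      (cfcHom_isClosedEmbedding (R := ℝ) hA2sa).continuous
    have hterm : ((cfcHom (R := ℝ) hA2sa) ∘ fun k : ℕ => ((2*k)! : ℝ)⁻¹ •
        (⟨_, qfW_cont.continuousOn.restrict⟩ : C(spectrum ℝ A2, ℝ)) ^ k)
        = fun k : ℕ => ((2*k)! : ℝ)⁻¹ • (cfc qfW A2) ^ k := by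
      funext k
      simp only [Function.comp_apply, map_smul, map_pow]
      rw [← hWapp]
    rw [hterm] at h
    have hlim : cfcHom (R := ℝ) hA2sa
        (⟨_, qfC_cont.continuousOn.restrict⟩ : C(spectrum ℝ A2, ℝ)) = 1 + (2:ℝ) • g := by
      rw [← hCapp]
      have e1 : qfC = fun x => (1:ℝ) + (2:ℝ) • qfF x := by
        funext x
        rw [smul_eq_mul, ← qf_key4 x]
      rw [e1, cfc_add (a := A2) (f := fun _ : ℝ => (1:ℝ)) (g := fun x => (2:ℝ) • qfF x)
        (by fun_prop) (by exact (qfF_cont.const_smul (2:ℝ)).continuousOn),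
        cfc_smul (a := A2) (s := (2:ℝ)) (f := qfF) (qfF_cont.continuousOn),
        hgf, cfc_const (1:ℝ) A2 hA2sa, map_one]
    rw [hlim] at h
    exact h
  have hsumA_odd : HasSum (fun k : ℕ => ((2*k+1)! : ℝ)⁻¹ • (cfc qfW A2) ^ k)
      (cfc qfO A2) := by
    have h := hsumCM_odd.map (cfcHom (R := ℝ) hA2sa)
      (cfcHom_isClosedEmbedding (R := ℝ) hA2sa).continuous
    have hterm : ((cfcHom (R := ℝ) hA2sa) ∘ fun k : ℕ => ((2*k+1)! : ℝ)⁻¹ •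
        (⟨_, qfW_cont.continuousOn.restrict⟩ : C(spectrum ℝ A2, ℝ)) ^ k)
        = fun k : ℕ => ((2*k+1)! : ℝ)⁻¹ • (cfc qfW A2) ^ k := by
      funext k
      simp only [Function.comp_apply, map_smul, map_pow]
      rw [← hWapp]
    rw [hterm] at h
    rw [← hOapp] at h
    exact h
  have hsumB_even : HasSum
      (fun k : ℕ => ((2*k)! : ℝ)⁻¹ • ((cfc qfW A2).restrictScalars ℝ) ^ k)
      ((1 + (2:ℝ) • g).restrictScalars ℝ) := by
    have h := ιHasSum hsumA_even
    have e : (fun k : ℕ => ((((2*k)! : ℝ)⁻¹ • (cfc qfW A2) ^ k).restrictScalars ℝ))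
        = fun k : ℕ => ((2*k)! : ℝ)⁻¹ • ((cfc qfW A2).restrictScalars ℝ) ^ k := by
      funext k; rw [ιsmul, ιpow]
    rwa [e] at h
  have hsumB_odd : HasSum
      (fun k : ℕ => ((2*k+1)! : ℝ)⁻¹ • ((cfc qfW A2).restrictScalars ℝ) ^ k)
      ((cfc qfO A2).restrictScalars ℝ) := by
    have h := ιHasSum hsumA_odd
    have e : (fun k : ℕ => ((((2*k+1)! : ℝ)⁻¹ • (cfc qfW A2) ^ k).restrictScalars ℝ))
        = fun k : ℕ => ((2*k+1)! : ℝ)⁻¹ • ((cfc qfW A2).restrictScalars ℝ) ^ k := by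
      funext k; rw [ιsmul, ιpow]
    rwa [e] at h
  -- the candidate r and its square
  set R2 : Z →L[ℝ] Z := (2:ℝ) • (α * (cfc qfH A2).restrictScalars ℝ) with hR2def
  have hR2sq : R2 * R2 = (cfc qfW A2).restrictScalars ℝ := by
    rw [hR2def, smul_mul_assoc, mul_smul_comm, smul_smul]
    norm_num
    have e1 : (α * (cfc qfH A2).restrictScalars ℝ) * (α * (cfc qfH A2).restrictScalars ℝ)
        = (A2 * (cfc qfH A2 * cfc qfH A2)).restrictScalars ℝ := by
      calc (α * (cfc qfH A2).restrictScalars ℝ) * (α * (cfc qfH A2).restrictScalars ℝ)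
          = α * (((cfc qfH A2).restrictScalars ℝ * α) * (cfc qfH A2).restrictScalars ℝ) := by
            rw [mul_assoc, mul_assoc]
        _ = α * ((α * (cfc qfH A2).restrictScalars ℝ) * (cfc qfH A2).restrictScalars ℝ) := by
            rw [← hcomm_h]
        _ = (α * α) * ((cfc qfH A2).restrictScalars ℝ * (cfc qfH A2).restrictScalars ℝ) := by
            rw [mul_assoc, mul_assoc]
        _ = (A2 * (cfc qfH A2 * cfc qfH A2)).restrictScalars ℝ := by
            rw [← hA2r, ιmul, ιmul]
    rw [e1, ← ιsmul, hWfact]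
  have hpow_even : ∀ k : ℕ, R2 ^ (2*k) = ((cfc qfW A2).restrictScalars ℝ) ^ k := by
    intro k
    rw [pow_mul, pow_two, hR2sq]
  have hOR : (cfc qfO A2).restrictScalars ℝ * R2 = (2:ℝ) • α := by
    rw [hR2def, mul_smul_comm]
    congr 1
    rw [← mul_assoc, ← hcomm_o, mul_assoc, ← ιmul, hOu, ιone, mul_one]
  have hexp1 : NormedSpace.exp R2 = (1 + (2:ℝ) • g).restrictScalars ℝ + (2:ℝ) • α := by
    refine (NormedSpace.exp_series_hasSum_exp' (𝕂 := ℝ) R2).unique ?_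
    refine HasSum.even_add_odd ?_ ?_
    · have e : (fun k : ℕ => ((2*k)! : ℝ)⁻¹ • R2 ^ (2*k))
          = fun k : ℕ => ((2*k)! : ℝ)⁻¹ • ((cfc qfW A2).restrictScalars ℝ) ^ k := by
        funext k; rw [hpow_even]
      rw [e]; exact hsumB_even
    · have h := hsumB_odd.mul_right R2
      have e : (fun k : ℕ => (((2*k+1)! : ℝ)⁻¹ • ((cfc qfW A2).restrictScalars ℝ) ^ k) * R2)
          = fun k : ℕ => ((2*k+1)! : ℝ)⁻¹ • R2 ^ (2*k+1) := by
        funext k; rw [smul_mul_assoc, ← hpow_even, ← pow_succ]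
      rw [e, hOR] at h
      exact h
  have hexp2 : NormedSpace.exp (-R2)
      = (1 + (2:ℝ) • g).restrictScalars ℝ + -((2:ℝ) • α) := by
    refine (NormedSpace.exp_series_hasSum_exp' (𝕂 := ℝ) (-R2)).unique ?_
    refine HasSum.even_add_odd ?_ ?_
    · have e : (fun k : ℕ => ((2*k)! : ℝ)⁻¹ • (-R2) ^ (2*k))
          = fun k : ℕ => ((2*k)! : ℝ)⁻¹ • ((cfc qfW A2).restrictScalars ℝ) ^ k := by
        funext k; rw [Even.neg_pow (even_two_mul k), hpow_even]
      rw [e]; exact hsumB_even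
    · have h := hsumB_odd.mul_right (-R2)
      have e : (fun k : ℕ => (((2*k+1)! : ℝ)⁻¹ • ((cfc qfW A2).restrictScalars ℝ) ^ k) * (-R2))
          = fun k : ℕ => ((2*k+1)! : ℝ)⁻¹ • (-R2) ^ (2*k+1) := by
        funext k
        rw [smul_mul_assoc]
        congr 1
        rw [pow_succ, Even.neg_pow (even_two_mul k), hpow_even]
      rw [e, mul_neg, hOR] at h
      exact h
  have hι2g : (1 + (2:ℝ) • g).restrictScalars ℝ
      = 1 + (2:ℝ) • (g.restrictScalars ℝ) := by
    rw [ιadd, ιone, ιsmul]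
  -- wrap up
  refine ⟨α * (cfc qfH A2).restrictScalars ℝ, ?_, ?_, ?_, ?_⟩
  · intro c z
    show α ((cfc qfH A2) (c • z)) = _
    rw [(cfc qfH A2).map_smul c z, hαanti c ((cfc qfH A2) z)]
    rfl
  · intro z z'
    have hu_sa : IsSelfAdjoint (cfc qfH A2) := cfc_predicate qfH A2
    show (inner ℂ z (α ((cfc qfH A2) z')) : ℂ) = (inner ℂ z' (α ((cfc qfH A2) z)) : ℂ)
    rw [hαsym z ((cfc qfH A2) z')]
    have had : (inner ℂ ((cfc qfH A2) z') (α z) : ℂ) = inner ℂ z' ((cfc qfH A2) (α z)) := by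
      conv_lhs => rw [← hu_sa.adjoint_eq]
      exact ContinuousLinearMap.adjoint_inner_left _ _ _
    rw [had]
    congr 1
    have := congrArg (fun T : Z →L[ℝ] Z => T z) hcomm_h
    simpa using this.symm
  · show g.restrictScalars ℝ = (2:ℝ)⁻¹ • ((2:ℝ)⁻¹ •
      (NormedSpace.exp R2 + NormedSpace.exp (-R2)) - 1)
    rw [hexp1, hexp2, hι2g]
    module
  · show α = (2:ℝ)⁻¹ • ((2:ℝ)⁻¹ •
      (NormedSpace.exp R2 - NormedSpace.exp (-R2)))
    rw [hexp1, hexp2]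
    module
end
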